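/- Fix L : ℕ, finite types C' and finite dimension types d, d'. For each pair (l_A, l_B) ∈ Fin (L+1) × Fin (L+1) let Φ(l_A, l_B) : Matrix d d ℂ →ₗ[ℂ] (C' → Matrix d' d' ℂ) be a linear map, let a, b : C' → Bool, and for c' : C' define f_{c'} : K × K → K × K by f_{c'}(k_A, k_B) = (if a c' then k_A else ⊥, if b c' then k_B else ⊥). Define M on families ρ : K × K → Matrix d d ℂ by (M ρ)(k'_A, k'_B, c') = ∑ over pairs (k_A, k_B) with f_{c'}(k_A, k_B) = (k'_A, k'_B) of Φ(len k_A, len k_B)(ρ(k_A, k_B)) c'. Let R denote the ideal map (acting per c' on the output side). Then M ∘ R = R ∘ M. -/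

import Mathlib

open scoped ComplexOrder

/-- The key alphabet: keys of length `l ≤ L`, i.e. pairs of a length `l : Fin (L+1)`
and a bitstring of that length. -/
abbrev Key (L : ℕ) := Σ l : Fin (L+1), (Fin (l : ℕ) → Bool)

/-- The length of a key. -/
def lenKey {L : ℕ} (k : Key L) : Fin (L+1) := k.1

/-- The unique key of length `0` (the abort symbol `⊥`). -/
def botKey (L : ℕ) : Key L := ⟨0, fun _ => false⟩

/-- The ideal-key weight `w(k_A, k_B)`: `2^(-len k_A)` if the lengths agree and
`k_A = k_B`, `0` if the lengths agree but `k_A ≠ k_B`, and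
`2^(-(len k_A + len k_B))` if the lengths differ. -/
noncomputable def idealWt {L : ℕ} (kA kB : Key L) : ℝ :=
  if lenKey kA = lenKey kB then
    (if kA = kB then (2:ℝ) ^ (-((lenKey kA : ℕ) : ℤ)) else 0)
  else (2:ℝ) ^ (-(((lenKey kA : ℕ) : ℤ) + ((lenKey kB : ℕ) : ℤ)))

/-- The ideal map `R`, acting per value of the additional classical index `c`:
it replaces the key registers by ideal keys, weighting by `idealWt` and summing the
input state over all key pairs with the same pair of lengths. -/
noncomputable def idealMap {L : ℕ} {C d : Type*}
    (ρ : Key L × Key L × C → Matrix d d ℂ) : Key L × Key L × C → Matrix d d ℂ :=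
  fun p => idealWt p.1 p.2.1 •
    ∑ q : Key L × Key L,
      if lenKey q.1 = lenKey p.1 ∧ lenKey q.2 = lenKey p.2.1
        then ρ (q.1, q.2, p.2.2) else 0

/-- The ideal map `R` on families indexed only by the two key registers. -/
noncomputable def idealMapKK {L : ℕ} {d : Type*}
    (ρ : Key L × Key L → Matrix d d ℂ) : Key L × Key L → Matrix d d ℂ :=
  fun p => idealWt p.1 p.2 •
    ∑ q : Key L × Key L,
      if lenKey q.1 = lenKey p.1 ∧ lenKey q.2 = lenKey p.2 then ρ q else 0

/-- The classically controlled key update: conditioned on `c'`, each party's key is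
either kept (`a c'` / `b c'` true) or replaced by the abort symbol `⊥`. -/
def keyErase {L : ℕ} {C' : Type*} (a b : C' → Bool) (c' : C')
    (q : Key L × Key L) : Key L × Key L :=
  (if a c' then q.1 else botKey L, if b c' then q.2 else botKey L)

/-- The composite authentication post-processing channel: a key-length-conditioned
communication channel `Φ` followed by the classically controlled key-erasure update. -/
noncomputable def appMap {L : ℕ} {C' d d' : Type*}
    (Φ : Fin (L+1) × Fin (L+1) → (Matrix d d ℂ →ₗ[ℂ] (C' → Matrix d' d' ℂ)))
    (a b : C' → Bool)
    (ρ : Key L × Key L → Matrix d d ℂ) : Key L × Key L × C' → Matrix d' d' ℂ :=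
  fun p => ∑ q : Key L × Key L,
    if keyErase a b p.2.2 q = (p.1, p.2.1)
      then Φ (lenKey q.1, lenKey q.2) (ρ q) p.2.2 else 0

/-!
On each length class `(l_A, l_B)` the weight `w` is a probability distribution on key pairs:
the uniform distribution on equal keys if `l_A = l_B`, and on independent keys otherwise.
Its marginals are `k ↦ w(k, ⊥)` and `k ↦ w(⊥, k)` (uniform on keys of the given length), so
erasing one key, or both, pushes the ideal distribution of a length class forward to the ideal
distribution of the image class (`sum_idealWt_keyErase`). Since `Φ` sees only the key lengths,
both sides of the identity then expand to the same sum over the input key pairs.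
-/

section

variable {L : ℕ} {C' d d' : Type*}

lemma lenKey_botKey : lenKey (botKey L) = 0 := rfl

lemma botKey_eq_iff {k : Key L} : botKey L = k ↔ lenKey k = 0 := by
  refine ⟨fun h => h ▸ rfl, fun h => ?_⟩
  obtain ⟨l, s⟩ := k
  obtain rfl : l = 0 := h
  exact Sigma.ext rfl (heq_of_eq (funext fun i => i.elim0))

lemma idealWt_comm (kA kB : Key L) : idealWt kA kB = idealWt kB kA := by
  unfold idealWt
  by_cases h : lenKey kA = lenKey kB
  · simp only [h, eq_comm (a := kA)]
  · simp [h, Ne.symm h, add_comm]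

lemma idealWt_botKey_right (k : Key L) :
    idealWt k (botKey L) = (2 : ℝ) ^ (-((lenKey k : ℕ) : ℤ)) := by
  by_cases h : lenKey k = 0
  · obtain rfl := botKey_eq_iff.mpr h
    simp [idealWt]
  · simp [idealWt, lenKey_botKey, h]

lemma idealWt_botKey_botKey : idealWt (botKey L) (botKey L) = 1 := by
  simp [idealWt_botKey_right, lenKey_botKey]

lemma sum_idealWt_fiber_right (kA : Key L) (l : Fin (L+1)) :
    ∑ kB : Key L, (if lenKey kB = l then idealWt kA kB else 0) = idealWt kA (botKey L) := by
  obtain ⟨lA, sA⟩ := kA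
  rw [idealWt_botKey_right, Fintype.sum_sigma]
  by_cases h : lA = l
  · subst h
    simp [idealWt, lenKey, Sigma.ext_iff]
  · simp [idealWt, lenKey, h, zpow_add₀]

lemma sum_idealWt_fiber_left (kB : Key L) (l : Fin (L+1)) :
    ∑ kA : Key L, (if lenKey kA = l then idealWt kA kB else 0) = idealWt (botKey L) kB := by
  simp only [idealWt_comm _ kB, sum_idealWt_fiber_right]

lemma sum_idealWt_fiber (l₁ l₂ : Fin (L+1)) :
    ∑ u : Key L × Key L, (if lenKey u.1 = l₁ ∧ lenKey u.2 = l₂ then idealWt u.1 u.2 else 0)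
      = 1 := by
  simp only [Fintype.sum_prod_type, ite_and, Finset.sum_ite_irrel, Finset.sum_const_zero,
    sum_idealWt_fiber_right, sum_idealWt_fiber_left, idealWt_botKey_botKey]

lemma sum_idealWt_keyErase (a b : C' → Bool) (c : C') (k v : Key L × Key L) :
    ∑ u : Key L × Key L, (if keyErase a b c u = k ∧ lenKey u.1 = lenKey v.1
        ∧ lenKey u.2 = lenKey v.2 then idealWt u.1 u.2 else 0)
      = if lenKey (keyErase a b c v).1 = lenKey k.1 ∧ lenKey (keyErase a b c v).2 = lenKey k.2
        then idealWt k.1 k.2 else 0 := by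
  obtain ⟨kA, kB⟩ := k
  unfold keyErase
  cases a c <;> cases b c <;> simp only [Bool.false_eq_true, if_false, if_true]
  · by_cases h : (botKey L, botKey L) = (kA, kB)
    · obtain ⟨rfl, rfl⟩ := Prod.mk.inj h
      simp only [true_and, and_self, if_true, sum_idealWt_fiber, idealWt_botKey_botKey]
    · rw [if_neg]
      simp only [h, false_and, if_false, Finset.sum_const_zero]
      rintro ⟨h1, h2⟩
      exact h (Prod.ext (botKey_eq_iff.2 h1.symm) (botKey_eq_iff.2 h2.symm))
  · by_cases hA : botKey L = kA
    · subst hA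
      by_cases hv : lenKey kB = lenKey v.2
      · simp [Fintype.sum_prod_type_right, ite_and, Finset.sum_ite_irrel, hv,
          sum_idealWt_fiber_left]
      · rw [if_neg fun h => hv h.2.symm]
        exact Finset.sum_eq_zero fun u _ => if_neg fun ⟨hu, _, h⟩ => hv ((Prod.mk.inj hu).2 ▸ h)
    · rw [if_neg fun h => hA (botKey_eq_iff.2 h.1.symm)]
      exact Finset.sum_eq_zero fun u _ => if_neg fun h => hA (Prod.mk.inj h.1).1
  · by_cases hB : botKey L = kB
    · subst hB
      by_cases hv : lenKey kA = lenKey v.1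
      · simp [Fintype.sum_prod_type, ite_and, Finset.sum_ite_irrel, hv, sum_idealWt_fiber_right]
      · rw [if_neg fun h => hv h.1.symm]
        exact Finset.sum_eq_zero fun u _ => if_neg fun ⟨hu, h, _⟩ => hv ((Prod.mk.inj hu).1 ▸ h)
    · rw [if_neg fun h => hB (botKey_eq_iff.2 h.2.symm)]
      exact Finset.sum_eq_zero fun u _ => if_neg fun h => hB (Prod.mk.inj h.1).2
  · simp [ite_and, eq_comm]

variable (Φ : Fin (L+1) × Fin (L+1) → (Matrix d d ℂ →ₗ[ℂ] (C' → Matrix d' d' ℂ)))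
  (a b : C' → Bool) (ρ : Key L × Key L → Matrix d d ℂ)

lemma map_idealMapKK (u : Key L × Key L) :
    Φ (lenKey u.1, lenKey u.2) (idealMapKK ρ u) = idealWt u.1 u.2 • ∑ v : Key L × Key L,
      if lenKey v.1 = lenKey u.1 ∧ lenKey v.2 = lenKey u.2
        then Φ (lenKey v.1, lenKey v.2) (ρ v) else 0 := by
  rw [idealMapKK, LinearMap.map_smul_of_tower, map_sum]
  congr 1
  refine Finset.sum_congr rfl fun v _ => ?_
  split_ifs with h
  · rw [h.1, h.2]
  · exact map_zero _

lemma appMap_idealMapKK_apply (kA kB : Key L) (c : C') :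
    appMap Φ a b (idealMapKK ρ) (kA, kB, c) = ∑ v : Key L × Key L,
      (∑ u : Key L × Key L, if keyErase a b c u = (kA, kB) ∧ lenKey u.1 = lenKey v.1
          ∧ lenKey u.2 = lenKey v.2 then idealWt u.1 u.2 else 0)
        • Φ (lenKey v.1, lenKey v.2) (ρ v) c := by
  simp only [appMap, map_idealMapKK, Finset.sum_smul, ite_smul, zero_smul]
  rw [Finset.sum_comm]
  refine Finset.sum_congr rfl fun u _ => ?_
  split_ifs with hu
  · rw [Pi.smul_apply, Finset.sum_apply, Finset.smul_sum]
    refine Finset.sum_congr rfl fun v _ => ?_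
    simp only [hu, true_and, eq_comm (a := lenKey u.1), eq_comm (a := lenKey u.2), ite_apply,
      Pi.zero_apply, smul_ite, smul_zero]
  · simp [hu]

lemma idealMap_appMap_apply (kA kB : Key L) (c : C') :
    idealMap (appMap Φ a b ρ) (kA, kB, c) = ∑ v : Key L × Key L,
      (if lenKey (keyErase a b c v).1 = lenKey kA ∧ lenKey (keyErase a b c v).2 = lenKey kB
        then idealWt kA kB else 0) • Φ (lenKey v.1, lenKey v.2) (ρ v) c := by
  simp only [idealMap, appMap, Prod.mk.eta, Finset.ite_sum_zero, Finset.smul_sum]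
  rw [Finset.sum_comm]
  refine Finset.sum_congr rfl fun v _ => ?_
  rw [Finset.sum_eq_single (keyErase a b c v)]
  · simp only [if_true, ite_smul, zero_smul, smul_ite, smul_zero]
  · intro w _ hw
    simp [Ne.symm hw]
  · simp

end

/-- The composite authentication post-processing channel commutes with the ideal map. -/
theorem appMap_comm_idealMap (L : ℕ) (C' d d' : Type*)
    (Φ : Fin (L+1) × Fin (L+1) → (Matrix d d ℂ →ₗ[ℂ] (C' → Matrix d' d' ℂ)))
    (a b : C' → Bool)
    (ρ : Key L × Key L → Matrix d d ℂ) :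
    appMap Φ a b (idealMapKK ρ) = idealMap (appMap Φ a b ρ) := by
  funext ⟨kA, kB, c⟩
  rw [appMap_idealMapKK_apply, idealMap_appMap_apply]
  simp only [sum_idealWt_keyErase]
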